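/- arXiv:1410.3126 — 4 statements merged into one kernel-verified Lean document; each statement's English description precedes it below -/
import Mathlib

section
/- Let J be a finite symmetric set of pairs (α, β) ∈ ℕ^d × ℕ^d (i.e. (α, β) ∈ J implies (β, α) ∈ J) with rate constants K(α, β) ≥ 0, let M > 0, and suppose ξ ∈ ℝ^d with ξ_i > 0 satisfies the unitarity (Stückelberg–Batishcheva–Pirogov) condition: for every β ∈ ℕ^d, Σ_{α : (α,β)∈J} K(α, β) ξ^α = ξ^β · Σ_{α : (α,β)∈J} K(β, α), where ξ^α = ∏_i ξ_i^{α_i}. Define the intensities λ_{(α,β)}(n) = M^{1 − Σ_i α_i} · K(α, β) · ∏_i n_i (n_i − 1) ⋯ (n_i − α_i + 1) (the descending factorial, equal to 0 if n_i < α_i for some i), and the product-Poisson weight ν(n) = ∏_i (ξ_i M)^{n_i} e^{−ξ_i M} / n_i! for n ∈ ℕ^d, extended by ν(m) = 0 if some coordinate of m is negative. Then ν satisfies the global balance equations: for every n ∈ ℕ^d, Σ_{(α,β)∈J} ν(n − β + α) · λ_{(α,β)}(n − β + α) = ν(n) · Σ_{(α,β)∈J} λ_{(α,β)}(n). (Theorem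 1(b), part 1: the product-Poisson measure is invariant.) -/
open scoped BigOperators

/-- The product-Poisson weight `ν(m) = ∏ᵢ (ξᵢ M)^{mᵢ} e^{-ξᵢ M} / mᵢ!` on `ℤ^d`,
extended by `ν(m) = 0` whenever some coordinate of `m` is negative. -/
noncomputable def poissonWeight (d : ℕ) (ξ : Fin d → ℝ) (M : ℝ) (m : Fin d → ℤ) : ℝ :=
  if ∀ i, 0 ≤ m i then
    ∏ i, (ξ i * M) ^ (m i).toNat * Real.exp (-(ξ i * M)) / Nat.factorial (m i).toNat
  else 0

/-- The reaction intensity `λ_{(α,β)}(m) = M^{1-∑ᵢ αᵢ} K(α,β) ∏ᵢ mᵢ(mᵢ-1)⋯(mᵢ-αᵢ+1)`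
(descending factorial, equal to `0` if `mᵢ < αᵢ` for some `i`). -/
noncomputable def intensity (d : ℕ) (M : ℝ) (Kab : ℝ) (α : Fin d → ℕ)
    (m : Fin d → ℤ) : ℝ :=
  M ^ ((1 : ℤ) - ∑ i, (α i : ℤ)) * Kab * ∏ i, ((m i).toNat.descFactorial (α i) : ℝ)

/-!
For the product-Poisson weight `ν` one has `ν(m + α) λ_{(α,β)}(m + α) = M K(α,β) ξ^α ν(m)`,
because `(m+α)! / m!` is exactly the descending factorial in the intensity. Hence the flux into
`n` through the reaction `(α, β)` is `M K(α,β) ξ^α ν(n - β)`, and the outflux of `n` through it is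
`M K(α,β) ξ^α ν(n - α)`. Grouping the influx by `β`, the unitarity condition replaces
`∑_α K(α,β) ξ^α` by `ξ^β ∑_α K(β,α)`, and the symmetry of `J` turns this into the outflux.
-/

open Finset

noncomputable def poissonTerm (x : ℝ) (k : ℕ) : ℝ :=
  x ^ k * Real.exp (-x) / k.factorial

lemma poissonTerm_add_mul_descFactorial (x : ℝ) (a k : ℕ) :
    poissonTerm x (a + k) * (a + k).descFactorial k = x ^ k * poissonTerm x a := by
  have hfac : (a.factorial : ℝ) * (a + k).descFactorial k = (a + k).factorial := by
    exact_mod_cast Nat.add_sub_cancel a k ▸ Nat.factorial_mul_descFactorial (Nat.le_add_left k a)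
  have ha : (a.factorial : ℝ) ≠ 0 := by positivity
  rw [poissonTerm, poissonTerm, ← hfac, pow_add]
  field_simp

lemma zpow_one_sub_natCast_mul_pow {G₀ : Type*} [GroupWithZero G₀] (a : G₀) (s : ℕ) :
    a ^ (1 - (s : ℤ)) * a ^ s = a := by
  rw [← zpow_natCast, ← zpow_add' (Or.inr (Or.inl (by simp))), sub_add_cancel, zpow_one]

section PoissonWeight

variable {d : ℕ} (ξ : Fin d → ℝ) (M : ℝ)

lemma poissonWeight_of_nonneg {m : Fin d → ℤ} (hm : ∀ i, 0 ≤ m i) :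
    poissonWeight d ξ M m = ∏ i, poissonTerm (ξ i * M) (m i).toNat :=
  if_pos hm

lemma poissonWeight_of_neg {m : Fin d → ℤ} {j : Fin d} (hj : m j < 0) :
    poissonWeight d ξ M m = 0 :=
  if_neg fun hm => (hj.trans_le (hm j)).false

lemma intensity_of_toNat_lt (Kab : ℝ) {α : Fin d → ℕ} {m : Fin d → ℤ} {j : Fin d}
    (hj : (m j).toNat < α j) : intensity d M Kab α m = 0 := by
  rw [intensity, prod_eq_zero (mem_univ j) (by simpa [Nat.descFactorial_eq_zero_iff_lt]), mul_zero]

lemma poissonWeight_add_mul_intensity (Kab : ℝ) (α : Fin d → ℕ) (m : Fin d → ℤ) :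
    poissonWeight d ξ M (fun i => m i + α i) * intensity d M Kab α (fun i => m i + α i) =
      M * Kab * (∏ i, ξ i ^ α i) * poissonWeight d ξ M m := by
  by_cases hm : ∀ i, 0 ≤ m i
  · have hmα : ∀ i, 0 ≤ m i + α i := fun i => add_nonneg (hm i) (Int.natCast_nonneg _)
    have htoNat : ∀ i, (m i + α i).toNat = (m i).toNat + α i := fun i => by grind
    have hpow : M ^ (1 - ∑ i, (α i : ℤ)) * ∏ i, M ^ α i = M := by
      rw [prod_pow_eq_pow_sum, ← Nat.cast_sum, zpow_one_sub_natCast_mul_pow]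
    calc poissonWeight d ξ M (fun i => m i + α i) * intensity d M Kab α (fun i => m i + α i)
        = M ^ (1 - ∑ i, (α i : ℤ)) * Kab * ∏ i, poissonTerm (ξ i * M) ((m i).toNat + α i) *
            ((m i).toNat + α i).descFactorial (α i) := by
          rw [poissonWeight_of_nonneg ξ M hmα, intensity, prod_mul_distrib]
          simp only [htoNat]
          ring
      _ = M ^ (1 - ∑ i, (α i : ℤ)) * Kab * ∏ i, ξ i ^ α i * M ^ α i *
            poissonTerm (ξ i * M) (m i).toNat := by
          simp only [poissonTerm_add_mul_descFactorial, mul_pow]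
      _ = M * Kab * (∏ i, ξ i ^ α i) * poissonWeight d ξ M m := by
          rw [poissonWeight_of_nonneg ξ M hm, prod_mul_distrib, prod_mul_distrib]
          linear_combination (Kab * (∏ i, ξ i ^ α i) *
            ∏ i, poissonTerm (ξ i * M) (m i).toNat) * hpow
  · obtain ⟨j, hj⟩ := not_forall.mp hm
    rw [poissonWeight_of_neg ξ M (lt_of_not_ge hj), mul_zero]
    by_cases hjα : m j + α j < 0
    · rw [poissonWeight_of_neg ξ M (j := j) hjα, zero_mul]
    · rw [intensity_of_toNat_lt M Kab (j := j) (by omega), mul_zero]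

end PoissonWeight

lemma sum_mul_apply_snd_eq_sum_mul_apply_fst {ι R : Type*} [CommSemiring R] [DecidableEq ι]
    (J : Finset (ι × ι)) (hJ : ∀ p ∈ J, (p.2, p.1) ∈ J) (K : ι × ι → R) (w f : ι → R)
    (hunit : ∀ β, ∑ p ∈ J.filter (fun p => p.2 = β), K p * w p.1 =
      w β * ∑ p ∈ J.filter (fun p => p.2 = β), K (p.2, p.1)) :
    ∑ p ∈ J, K p * w p.1 * f p.2 = ∑ p ∈ J, K p * w p.1 * f p.1 := by
  have hmaps : ∀ p ∈ J, p.2 ∈ J.image Prod.snd := fun p hp => mem_image_of_mem _ hp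
  calc ∑ p ∈ J, K p * w p.1 * f p.2
      = ∑ β ∈ J.image Prod.snd, (∑ p ∈ J.filter (fun p => p.2 = β), K p * w p.1) * f β := by
        rw [← sum_fiberwise_of_maps_to hmaps]
        refine sum_congr rfl fun β _ => ?_
        rw [sum_mul]
        exact sum_congr rfl fun p hp => by rw [(mem_filter.mp hp).2]
    _ = ∑ β ∈ J.image Prod.snd,
          ∑ p ∈ J.filter (fun p => p.2 = β), K (p.2, p.1) * w p.2 * f p.2 := by
        refine sum_congr rfl fun β _ => ?_
        rw [hunit, mul_sum, sum_mul]
        refine sum_congr rfl fun p hp => ?_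
        rw [(mem_filter.mp hp).2]
        ring
    _ = ∑ p ∈ J, K (p.2, p.1) * w p.2 * f p.2 := sum_fiberwise_of_maps_to hmaps _
    _ = ∑ p ∈ J, K p * w p.1 * f p.1 :=
        sum_nbij' Prod.swap Prod.swap hJ hJ (fun _ _ => rfl) (fun _ _ => rfl) (fun _ _ => rfl)

theorem product_poisson_invariant_of_unitarity_general (d : ℕ)
    (J : Finset ((Fin d → ℕ) × (Fin d → ℕ)))
    (hJsymm : ∀ p ∈ J, (p.2, p.1) ∈ J)
    (K : (Fin d → ℕ) × (Fin d → ℕ) → ℝ)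
    (M : ℝ)
    (ξ : Fin d → ℝ)
    (hSBP : ∀ β : Fin d → ℕ,
      ∑ p ∈ J.filter (fun p => p.2 = β), K p * ∏ i, ξ i ^ p.1 i =
        (∏ i, ξ i ^ β i) * ∑ p ∈ J.filter (fun p => p.2 = β), K (p.2, p.1)) :
    ∀ n : Fin d → ℕ,
      ∑ p ∈ J, poissonWeight d ξ M (fun i => (n i : ℤ) - (p.2 i : ℤ) + (p.1 i : ℤ)) *
          intensity d M (K p) p.1 (fun i => (n i : ℤ) - (p.2 i : ℤ) + (p.1 i : ℤ)) =
        poissonWeight d ξ M (fun i => (n i : ℤ)) *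
          ∑ p ∈ J, intensity d M (K p) p.1 (fun i => (n i : ℤ)) := by
  intro n
  set f : (Fin d → ℕ) → ℝ := fun β => poissonWeight d ξ M (fun i => (n i : ℤ) - β i)
  have hout : ∀ p, poissonWeight d ξ M (fun i => (n i : ℤ)) *
      intensity d M (K p) p.1 (fun i => (n i : ℤ)) = M * (K p * (∏ i, ξ i ^ p.1 i) * f p.1) := by
    intro p
    simpa [mul_assoc] using poissonWeight_add_mul_intensity ξ M (K p) p.1 (fun i => n i - p.1 i)
  calc _ = M * ∑ p ∈ J, K p * (∏ i, ξ i ^ p.1 i) * f p.2 := by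
        rw [mul_sum]
        refine sum_congr rfl fun p _ => ?_
        rw [poissonWeight_add_mul_intensity ξ M (K p) p.1 (fun i => n i - p.2 i)]
        ring
    _ = M * ∑ p ∈ J, K p * (∏ i, ξ i ^ p.1 i) * f p.1 := by
        rw [sum_mul_apply_snd_eq_sum_mul_apply_fst J hJsymm K (fun β => ∏ i, ξ i ^ β i) f hSBP]
    _ = _ := by rw [mul_sum, mul_sum]; exact sum_congr rfl fun p _ => (hout p).symm

/-- **Theorem 1(b), part 1.** Under the unitarity (Stückelberg–Batishcheva–Pirogov)
condition, the product-Poisson measure with parameters `λᵢ = ξᵢ M` satisfies the global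
balance equations, i.e. it is invariant for the stochastic chemical-kinetics dynamics. -/
theorem product_poisson_invariant_of_unitarity (d : ℕ)
    (J : Finset ((Fin d → ℕ) × (Fin d → ℕ)))
    (hJsymm : ∀ p ∈ J, (p.2, p.1) ∈ J)
    (K : (Fin d → ℕ) × (Fin d → ℕ) → ℝ) (hK : ∀ p ∈ J, 0 ≤ K p)
    (M : ℝ) (hM : 0 < M)
    (ξ : Fin d → ℝ) (hξ : ∀ i, 0 < ξ i)
    (hSBP : ∀ β : Fin d → ℕ,
      ∑ p ∈ J.filter (fun p => p.2 = β), K p * ∏ i, ξ i ^ p.1 i =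
        (∏ i, ξ i ^ β i) * ∑ p ∈ J.filter (fun p => p.2 = β), K (p.2, p.1)) :
    ∀ n : Fin d → ℕ,
      ∑ p ∈ J, poissonWeight d ξ M (fun i => (n i : ℤ) - (p.2 i : ℤ) + (p.1 i : ℤ)) *
          intensity d M (K p) p.1 (fun i => (n i : ℤ) - (p.2 i : ℤ) + (p.1 i : ℤ)) =
        poissonWeight d ξ M (fun i => (n i : ℤ)) *
          ∑ p ∈ J, intensity d M (K p) p.1 (fun i => (n i : ℤ)) :=
  product_poisson_invariant_of_unitarity_general d J hJsymm K M ξ hSBP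
end

section
/- Let J be a finite symmetric set of pairs (α, β) ∈ ℕ^d × ℕ^d with rate constants K(α, β) ≥ 0, let M > 0, and suppose ξ ∈ ℝ^d with ξ_i > 0 satisfies the detailed balance condition K(α, β) ξ^α = K(β, α) ξ^β for all (α, β) ∈ J. Define λ_{(α,β)}(n) = M^{1 − Σ_i α_i} K(α, β) ∏_i n_i(n_i−1)⋯(n_i−α_i+1) (descending factorial, 0 if n_i < α_i) and ν(n) = ∏_i (ξ_i M)^{n_i} e^{−ξ_i M} / n_i! for n ∈ ℕ^d. Then the Markov chain is reversible with respect to ν: for every n ∈ ℕ^d with n_i ≥ α_i for all i and every (α, β) ∈ J, ν(n) · λ_{(α,β)}(n) = ν(n − α + β) · λ_{(β,α)}(n − α + β). -/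
/-!
Removing the `α` reactant molecules from state `n` turns the Poisson factor `x^{nᵢ}/nᵢ!`
times the falling factorial `nᵢ(nᵢ-1)⋯(nᵢ-αᵢ+1)` into `x^{nᵢ-αᵢ}/(nᵢ-αᵢ)!` times `x^{αᵢ}`.
Hence both `ν(n) λ_{(α,β)}(n)` and `ν(n-α+β) λ_{(β,α)}(n-α+β)` factor through the common
weight `ν(n-α)`, and what is left is `M K(α,β) ξ^α` on one side and `M K(β,α) ξ^β` on the
other, which agree by detailed balance.
-/

open scoped BigOperators

/-- The product-Poisson weight `ν(n) = ∏ᵢ (ξᵢ M)^{nᵢ} e^{-ξᵢ M} / nᵢ!` on `ℕ^d`. -/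
noncomputable def poissonWeightNat (d : ℕ) (ξ : Fin d → ℝ) (M : ℝ) (n : Fin d → ℕ) : ℝ :=
  ∏ i, (ξ i * M) ^ n i * Real.exp (-(ξ i * M)) / Nat.factorial (n i)

/-- The reaction intensity `λ_{(α,β)}(n) = M^{1-∑ᵢ αᵢ} K(α,β) ∏ᵢ nᵢ(nᵢ-1)⋯(nᵢ-αᵢ+1)`
(descending factorial, equal to `0` if `nᵢ < αᵢ` for some `i`). -/
noncomputable def intensityNat (d : ℕ) (M : ℝ) (Kab : ℝ) (α : Fin d → ℕ)
    (n : Fin d → ℕ) : ℝ :=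
  M ^ ((1 : ℤ) - ∑ i, (α i : ℤ)) * Kab * ∏ i, ((n i).descFactorial (α i) : ℝ)

theorem pow_mul_div_factorial_mul_descFactorial {F : Type*} [Field F] [CharZero F]
    (x e : F) {n a : ℕ} (h : a ≤ n) :
    x ^ n * e / n.factorial * n.descFactorial a = x ^ (n - a) * e / (n - a).factorial * x ^ a := by
  have hfac : ((n - a).factorial : F) * n.descFactorial a = n.factorial := by
    exact_mod_cast Nat.factorial_mul_descFactorial h
  have hpow : x ^ n = x ^ (n - a) * x ^ a := by rw [← pow_add, Nat.sub_add_cancel h]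
  have hfac_ne : ((n - a).factorial : F) ≠ 0 := by exact_mod_cast (n - a).factorial_ne_zero
  have hdesc_ne : (n.descFactorial a : F) ≠ 0 := by
    exact_mod_cast Nat.descFactorial_eq_zero_iff_lt.not.mpr h.not_gt
  rw [hpow, ← hfac]
  field_simp

theorem zpow_one_sub_sum_mul_prod_mul_pow {ι F : Type*} [Fintype ι] [Field F] (M : F)
    (ξ : ι → F) (γ : ι → ℕ) :
    M ^ ((1 : ℤ) - ∑ i, (γ i : ℤ)) * ∏ i, (ξ i * M) ^ γ i = M * ∏ i, ξ i ^ γ i := by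
  -- the exponents sum to `1 ≠ 0`, which is what `zpow_add'` asks for when `M = 0`
  have hsplit : M = M ^ ((1 : ℤ) - ∑ i, (γ i : ℤ)) * M ^ (∑ i, γ i) := by
    rw [← zpow_natCast, ← zpow_add' (by simp), Nat.cast_sum, sub_add_cancel, zpow_one]
  rw [Finset.prod_congr rfl fun i _ => mul_pow (ξ i) M (γ i), Finset.prod_mul_distrib,
    Finset.prod_pow_eq_pow_sum]
  nth_rw 3 [hsplit]
  ring

theorem poissonWeightNat_mul_prod_descFactorial {d : ℕ} (ξ : Fin d → ℝ) (M : ℝ)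
    {n α : Fin d → ℕ} (hα : α ≤ n) :
    poissonWeightNat d ξ M n * ∏ i, ((n i).descFactorial (α i) : ℝ) =
      poissonWeightNat d ξ M (n - α) * ∏ i, (ξ i * M) ^ α i := by
  simp only [poissonWeightNat, ← Finset.prod_mul_distrib]
  exact Finset.prod_congr rfl fun i _ => pow_mul_div_factorial_mul_descFactorial _ _ (hα i)

theorem poissonWeightNat_mul_intensityNat {d : ℕ} (ξ : Fin d → ℝ) (M Kab : ℝ)
    {n α : Fin d → ℕ} (hα : α ≤ n) :
    poissonWeightNat d ξ M n * intensityNat d M Kab α n =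
      M * poissonWeightNat d ξ M (n - α) * (Kab * ∏ i, ξ i ^ α i) := by
  calc poissonWeightNat d ξ M n * intensityNat d M Kab α n
      = M ^ ((1 : ℤ) - ∑ i, (α i : ℤ)) * Kab *
          (poissonWeightNat d ξ M n * ∏ i, ((n i).descFactorial (α i) : ℝ)) := by
        rw [intensityNat]; ring
    _ = Kab * poissonWeightNat d ξ M (n - α) *
          (M ^ ((1 : ℤ) - ∑ i, (α i : ℤ)) * ∏ i, (ξ i * M) ^ α i) := by
        rw [poissonWeightNat_mul_prod_descFactorial ξ M hα]; ring
    _ = M * poissonWeightNat d ξ M (n - α) * (Kab * ∏ i, ξ i ^ α i) := by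
        rw [zpow_one_sub_sum_mul_prod_mul_pow]; ring

theorem reversibility_of_detailed_balance_general (d : ℕ)
    (J : Finset ((Fin d → ℕ) × (Fin d → ℕ)))
    (K : (Fin d → ℕ) × (Fin d → ℕ) → ℝ)
    (M : ℝ)
    (ξ : Fin d → ℝ)
    (hDB : ∀ p ∈ J, K p * ∏ i, ξ i ^ p.1 i = K (p.2, p.1) * ∏ i, ξ i ^ p.2 i) :
    ∀ n : Fin d → ℕ, ∀ p ∈ J, (∀ i, p.1 i ≤ n i) →
      poissonWeightNat d ξ M n * intensityNat d M (K p) p.1 n =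
        poissonWeightNat d ξ M (fun i => n i - p.1 i + p.2 i) *
          intensityNat d M (K (p.2, p.1)) p.2 (fun i => n i - p.1 i + p.2 i) := by
  rintro n ⟨α, β⟩ hp hα
  have hβ : β ≤ fun i => n i - α i + β i := fun i => Nat.le_add_left (β i) (n i - α i)
  have hcommon : (fun i => n i - α i + β i) - β = n - α := funext fun i => Nat.add_sub_cancel ..
  rw [poissonWeightNat_mul_intensityNat ξ M _ hα, poissonWeightNat_mul_intensityNat ξ M _ hβ,
    hcommon, hDB _ hp]

/-- If `ξ > 0` satisfies the detailed balance condition `K(α,β) ξ^α = K(β,α) ξ^β` for all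
`(α,β) ∈ J`, then the stochastic chemical-kinetics Markov chain is reversible with respect
to the product-Poisson weight `ν`: `ν(n) λ_{(α,β)}(n) = ν(n-α+β) λ_{(β,α)}(n-α+β)`. -/
theorem reversibility_of_detailed_balance (d : ℕ)
    (J : Finset ((Fin d → ℕ) × (Fin d → ℕ)))
    (hJsymm : ∀ p ∈ J, (p.2, p.1) ∈ J)
    (K : (Fin d → ℕ) × (Fin d → ℕ) → ℝ) (hK : ∀ p ∈ J, 0 ≤ K p)
    (M : ℝ) (hM : 0 < M)
    (ξ : Fin d → ℝ) (hξ : ∀ i, 0 < ξ i)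
    (hDB : ∀ p ∈ J, K p * ∏ i, ξ i ^ p.1 i = K (p.2, p.1) * ∏ i, ξ i ^ p.2 i) :
    ∀ n : Fin d → ℕ, ∀ p ∈ J, (∀ i, p.1 i ≤ n i) →
      poissonWeightNat d ξ M n * intensityNat d M (K p) p.1 n =
        poissonWeightNat d ξ M (fun i => n i - p.1 i + p.2 i) *
          intensityNat d M (K (p.2, p.1)) p.2 (fun i => n i - p.1 i + p.2 i) :=
  reversibility_of_detailed_balance_general d J K M ξ hDB
end

section
/- Let J be a finite symmetric set of pairs (α, β) ∈ ℕ^d × ℕ^d with rate constants K(α, β) ≥ 0, and suppose ξ ∈ ℝ^d with ξ_i > 0 satisfies the unitarity (Stückelberg–Batishcheva–Pirogov) condition: for every β ∈ ℕ^d, Σ_{α : (α,β)∈J} K(α, β) ξ^α = ξ^β · Σ_{α : (α,β)∈J} K(β, α). Then for every differentiable curve c : ℝ → ℝ^d with c_i(t) > 0 solving the quasi-mean dynamics c_i'(t) = Σ_{(α,β)∈J} (β_i − α_i) K(α, β) ∏_j c_j(t)^{α_j}, the entropy-like function t ↦ Σ_i c_i(t) · ( ln( c_i(t)/ξ_i )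 − 1 ) is nonincreasing; i.e. H(c) = Σ_i c_i (ln(c_i/ξ_i) − 1) is a Lyapunov function for the quasi-mean dynamics. (Batishcheva–Vedenyapin theorem.) -/
/-!
Writing `u = c / ξ` and `u^α = ∏ᵢ uᵢ^αᵢ`, the time derivative of `H` along the dynamics is
`∑_{(α,β) ∈ J} K(α,β) ξ^α u^α (log u^β - log u^α)`. Since `x (log y - log x) ≤ y - x`, this is at
most `∑ K(α,β) ξ^α (u^β - u^α)`, and that sum vanishes: grouping by the product complex `β`, the
unitarity condition turns `∑ K(α,β) ξ^α u^β` into `∑ K(β,α) ξ^β u^β`, which is `∑ K(α,β) ξ^α u^α`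
after reindexing the symmetric set `J` by `(α,β) ↦ (β,α)`.
-/

open Finset Real

theorem Real.mul_log_sub_log_le_sub {x y : ℝ} (hx : 0 < x) (hy : 0 < y) :
    x * (log y - log x) ≤ y - x :=
  calc x * (log y - log x) = x * log (y / x) := by rw [log_div hy.ne' hx.ne']
    _ ≤ x * (y / x - 1) := mul_le_mul_of_nonneg_left (log_le_sub_one_of_pos (div_pos hy hx)) hx.le
    _ = y - x := by field_simp

theorem Real.log_prod_pow {ι : Type*} [Fintype ι] {x : ι → ℝ} (hx : ∀ i, 0 < x i) (α : ι → ℕ) :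
    log (∏ i, x i ^ α i) = ∑ i, (α i : ℝ) * log (x i) := by
  rw [log_prod fun i _ => (pow_pos (hx i) _).ne']
  simp only [log_pow]

namespace Finset

variable {σ : Type*} {J : Finset (σ × σ)}

theorem sum_comp_swap_of_symm (hJ : ∀ p ∈ J, p.swap ∈ J) (g : σ × σ → ℝ) :
    ∑ p ∈ J, g p.swap = ∑ p ∈ J, g p :=
  sum_nbij' Prod.swap Prod.swap hJ hJ (fun _ _ => rfl) (fun _ _ => rfl) (fun _ _ => rfl)

variable [DecidableEq σ]

theorem sum_mul_apply_snd_eq_sum_fiberwise (g : σ × σ → ℝ) (f : σ → ℝ) :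
    ∑ p ∈ J, g p * f p.2 =
      ∑ β ∈ J.image Prod.snd, (∑ p ∈ J.filter (fun p => p.2 = β), g p) * f β := by
  rw [← sum_fiberwise_of_maps_to (fun p hp => mem_image_of_mem Prod.snd hp)]
  refine sum_congr rfl fun β _ => ?_
  rw [sum_mul]
  exact sum_congr rfl fun p hp => by rw [(mem_filter.mp hp).2]

theorem sum_mul_apply_snd_eq_fst_of_fiberwise (hJ : ∀ p ∈ J, p.swap ∈ J) {w : σ × σ → ℝ}
    (hw : ∀ β, ∑ p ∈ J.filter (fun p => p.2 = β), w p =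
      ∑ p ∈ J.filter (fun p => p.2 = β), w p.swap) (f : σ → ℝ) :
    ∑ p ∈ J, w p * f p.2 = ∑ p ∈ J, w p * f p.1 :=
  calc ∑ p ∈ J, w p * f p.2 = ∑ p ∈ J, w p.swap * f p.2 := by
        simp only [sum_mul_apply_snd_eq_sum_fiberwise, hw]
    _ = ∑ p ∈ J, w p * f p.1 := sum_comp_swap_of_symm hJ (fun p => w p * f p.1)

end Finset

theorem Real.hasDerivAt_mul_log_div_sub_one {x ξ : ℝ} (hx : x ≠ 0) (hξ : ξ ≠ 0) :
    HasDerivAt (fun y => y * (log (y / ξ) - 1)) (log (x / ξ)) x := by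
  have hlog := (((hasDerivAt_id x).div_const ξ).log (div_ne_zero hx hξ)).sub_const 1
  refine ((hasDerivAt_id x).mul hlog).congr_deriv ?_
  simp only [id]
  field_simp
  ring

section MassAction

variable {ι : Type*} [Fintype ι]

noncomputable def quasiMeanField (J : Finset ((ι → ℕ) × (ι → ℕ))) (K : (ι → ℕ) × (ι → ℕ) → ℝ)
    (c : ι → ℝ) (i : ι) : ℝ :=
  ∑ p ∈ J, ((p.2 i : ℝ) - (p.1 i : ℝ)) * K p * ∏ j, c j ^ p.1 j

noncomputable def boltzmannH (ξ c : ι → ℝ) : ℝ :=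
  ∑ i, c i * (log (c i / ξ i) - 1)

def IsUnitary (J : Finset ((ι → ℕ) × (ι → ℕ))) (K : (ι → ℕ) × (ι → ℕ) → ℝ) (ξ : ι → ℝ) :
    Prop :=
  ∀ β : ι → ℕ,
    ∑ p ∈ J.filter (fun p => p.2 = β), K p * ∏ i, ξ i ^ p.1 i =
      (∏ i, ξ i ^ β i) * ∑ p ∈ J.filter (fun p => p.2 = β), K (p.2, p.1)

variable {J : Finset ((ι → ℕ) × (ι → ℕ))} {K : (ι → ℕ) × (ι → ℕ) → ℝ} {ξ : ι → ℝ}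

theorem IsUnitary.sum_mul_apply_snd_eq_fst (hJ : ∀ p ∈ J, (p.2, p.1) ∈ J)
    (hU : IsUnitary J K ξ) (f : (ι → ℕ) → ℝ) :
    ∑ p ∈ J, K p * (∏ i, ξ i ^ p.1 i) * f p.2 = ∑ p ∈ J, K p * (∏ i, ξ i ^ p.1 i) * f p.1 := by
  refine sum_mul_apply_snd_eq_fst_of_fiberwise hJ (fun β => ?_) f
  rw [hU β, mul_sum]
  exact sum_congr rfl fun p hp => by rw [← (mem_filter.mp hp).2, mul_comm]; rfl

theorem sum_log_div_mul_quasiMeanField_nonpos (hJ : ∀ p ∈ J, (p.2, p.1) ∈ J)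
    (hK : ∀ p ∈ J, 0 ≤ K p) (hξ : ∀ i, 0 < ξ i) (hU : IsUnitary J K ξ) {a : ι → ℝ}
    (ha : ∀ i, 0 < a i) :
    ∑ i, log (a i / ξ i) * quasiMeanField J K a i ≤ 0 := by
  have hr : ∀ i, 0 < a i / ξ i := fun i => div_pos (ha i) (hξ i)
  set u : (ι → ℕ) → ℝ := fun α => ∏ i, (a i / ξ i) ^ α i
  have hu : ∀ α, 0 < u α := fun α => prod_pos fun i _ => pow_pos (hr i) _
  have ha_eq : ∀ α : ι → ℕ, ∏ i, a i ^ α i = (∏ i, ξ i ^ α i) * u α := fun α => by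
    simp only [u, div_pow, prod_div_distrib]
    rw [mul_div_cancel₀ _ (prod_pos fun i _ => pow_pos (hξ i) _).ne']
  have hlog_u : ∀ p : (ι → ℕ) × (ι → ℕ),
      log (u p.2) - log (u p.1) = ∑ i, ((p.2 i : ℝ) - p.1 i) * log (a i / ξ i) := fun p => by
    simp only [u, log_prod_pow hr, ← sum_sub_distrib, sub_mul]
  calc ∑ i, log (a i / ξ i) * quasiMeanField J K a i
      = ∑ p ∈ J, K p * (∏ i, ξ i ^ p.1 i) * (u p.1 * (log (u p.2) - log (u p.1))) := by
        simp only [quasiMeanField, mul_sum]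
        rw [sum_comm]
        refine sum_congr rfl fun p _ => ?_
        simp only [hlog_u, mul_sum, ha_eq]
        exact sum_congr rfl fun i _ => by ring
    _ ≤ ∑ p ∈ J, K p * (∏ i, ξ i ^ p.1 i) * (u p.2 - u p.1) :=
        sum_le_sum fun p hp => mul_le_mul_of_nonneg_left (mul_log_sub_log_le_sub (hu _) (hu _))
          (mul_nonneg (hK p hp) (prod_nonneg fun i _ => pow_nonneg (hξ i).le _))
    _ = 0 := by simp only [mul_sub, sum_sub_distrib, hU.sum_mul_apply_snd_eq_fst hJ, sub_self]

theorem hasDerivAt_boltzmannH_comp {c : ℝ → ι → ℝ} {c' : ι → ℝ} {t : ℝ} (hξ : ∀ i, ξ i ≠ 0)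
    (hc : ∀ i, c t i ≠ 0) (hderiv : ∀ i, HasDerivAt (fun s => c s i) (c' i) t) :
    HasDerivAt (fun s => boltzmannH ξ (c s)) (∑ i, log (c t i / ξ i) * c' i) t :=
  HasDerivAt.fun_sum fun i _ =>
    ((hasDerivAt_mul_log_div_sub_one (hc i) (hξ i)).comp t (hderiv i) :)

end MassAction

/-- **Batishcheva–Vedenyapin theorem.** If `ξ > 0` satisfies the unitarity
(Stückelberg–Batishcheva–Pirogov) condition, then the entropy-like functional
`H(c) = ∑ᵢ cᵢ (ln(cᵢ/ξᵢ) - 1)` is nonincreasing along every positive solution of the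
quasi-mean dynamics, i.e. `H` is a Lyapunov function for the quasi-mean dynamics. -/
theorem entropy_lyapunov_of_unitarity (d : ℕ)
    (J : Finset ((Fin d → ℕ) × (Fin d → ℕ)))
    (hJsymm : ∀ p ∈ J, (p.2, p.1) ∈ J)
    (K : (Fin d → ℕ) × (Fin d → ℕ) → ℝ) (hK : ∀ p ∈ J, 0 ≤ K p)
    (ξ : Fin d → ℝ) (hξ : ∀ i, 0 < ξ i)
    (hSBP : ∀ β : Fin d → ℕ,
      ∑ p ∈ J.filter (fun p => p.2 = β), K p * ∏ i, ξ i ^ p.1 i =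
        (∏ i, ξ i ^ β i) * ∑ p ∈ J.filter (fun p => p.2 = β), K (p.2, p.1)) :
    ∀ c : ℝ → Fin d → ℝ, (∀ t i, 0 < c t i) →
      (∀ t : ℝ, ∀ i : Fin d,
        HasDerivAt (fun s => c s i)
          (∑ p ∈ J, ((p.2 i : ℝ) - (p.1 i : ℝ)) * K p * ∏ j, c t j ^ p.1 j) t) →
      ∀ s t : ℝ, s ≤ t →
        ∑ i, c t i * (Real.log (c t i / ξ i) - 1) ≤
          ∑ i, c s i * (Real.log (c s i / ξ i) - 1) := by
  intro c hpos hderiv s t hst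
  have hH : ∀ t, HasDerivAt (fun s => boltzmannH ξ (c s))
      (∑ i, log (c t i / ξ i) * quasiMeanField J K (c t) i) t := fun t =>
    hasDerivAt_boltzmannH_comp (fun i => (hξ i).ne') (fun i => (hpos t i).ne') (hderiv t)
  exact antitone_of_hasDerivAt_nonpos hH
    (fun t => sum_log_div_mul_quasiMeanField_nonpos hJsymm hK hξ hSBP (hpos t)) hst
end

section
/- Let J be a finite symmetric set of pairs (α, β) ∈ ℕ^d × ℕ^d with rate constants K(α, β) ≥ 0 and let ξ ∈ ℝ^d with ξ_i > 0. Then the following identity holds for all s ∈ ℝ^d with s_i > 0 — Σ_{(α,β)∈J} ( s^β − s^α ) · K(α, β) · ξ^α = 0 — if and only if ξ satisfies the unitarity (Stückelberg–Batishcheva–Pirogov) condition: for every β ∈ ℕ^d, Σ_{α : (α,β)∈J} K(α, β) ξ^α = ξ^β · Σ_{α : (α,β)∈J} K(β, α). (The computation underlying Corollary 2: for the entropy H(c) = Σ_i c_i (ln(c_i/ξ_i) − 1), invariance of the product-Poisson measure forces the unitarity condition.) -/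
/-!
Using the symmetry of `J` to swap the roles of `α` and `β` in the `s^α` terms, the left-hand
side becomes `∑_β s^β · D(β)`, where `D(β)` is the difference of the two sides of the
unitarity condition at `β`. Monomials are linearly independent as functions on the positive
orthant (a polynomial vanishing on a box with infinite sides is zero), so the identity holds
for all `s > 0` exactly when every `D(β)` vanishes.
-/

open Finset

theorem sum_prod_pow_mul_eq_zero_on_box_iff {σ R : Type*} [Fintype σ] [CommRing R] [IsDomain R]
    (s : σ → Set R) (hs : ∀ i, (s i).Infinite) (S : Finset (σ → ℕ)) (c : (σ → ℕ) → R) :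
    (∀ x ∈ Set.univ.pi s, ∑ β ∈ S, (∏ i, x i ^ β i) * c β = 0) ↔ ∀ β ∈ S, c β = 0 := by
  classical
  refine ⟨fun h => ?_, fun h x _ => sum_eq_zero fun β hβ => by rw [h β hβ, mul_zero]⟩
  set P : MvPolynomial σ R :=
    ∑ β ∈ S, MvPolynomial.monomial (Finsupp.equivFunOnFinite.symm β) (c β)
  have hP : P = 0 := MvPolynomial.funext_set s hs fun x hx => by
    simp only [P, map_sum, MvPolynomial.eval_monomial, map_zero, Finsupp.prod_pow]
    simpa [mul_comm] using h x hx
  intro β hβ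
  simpa [P, MvPolynomial.coeff_sum, MvPolynomial.coeff_monomial, sum_ite_eq', hβ] using
    congrArg (MvPolynomial.coeff (Finsupp.equivFunOnFinite.symm β)) hP

section UnitarityDefect

variable {ι R : Type*} [DecidableEq ι] [CommRing R]

def unitarityDefect (J : Finset (ι × ι)) (K : ι × ι → R) (w : ι → R) (β : ι) : R :=
  ∑ p ∈ J.filter (·.2 = β), K p * w p.1 - w β * ∑ p ∈ J.filter (·.2 = β), K p.swap

theorem unitarityDefect_eq_zero_of_notMem_image_snd {J : Finset (ι × ι)} {β : ι}
    (hβ : β ∉ J.image Prod.snd) (K : ι × ι → R) (w : ι → R) : unitarityDefect J K w β = 0 := by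
  have : J.filter (·.2 = β) = ∅ :=
    filter_eq_empty_iff.2 fun p hp hpβ => hβ (mem_image.2 ⟨p, hp, hpβ⟩)
  simp [unitarityDefect, this]

theorem sum_sub_mul_eq_sum_mul_unitarityDefect {J : Finset (ι × ι)}
    (hJ : ∀ p ∈ J, p.swap ∈ J) (K : ι × ι → R) (m w : ι → R) :
    ∑ p ∈ J, (m p.2 - m p.1) * K p * w p.1 =
      ∑ β ∈ J.image Prod.snd, m β * unitarityDefect J K w β := by
  have hswap : ∑ p ∈ J, m p.1 * K p * w p.1 = ∑ p ∈ J, m p.2 * K p.swap * w p.2 :=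
    sum_nbij' Prod.swap Prod.swap hJ hJ (fun _ _ => rfl) (fun _ _ => rfl) (fun _ _ => rfl)
  have hfiber : ∀ p ∈ J, p.2 ∈ J.image Prod.snd := fun _ hp => mem_image_of_mem Prod.snd hp
  simp only [sub_mul, sum_sub_distrib]
  rw [hswap, ← sum_fiberwise_of_maps_to hfiber,
    ← sum_fiberwise_of_maps_to hfiber, ← sum_sub_distrib]
  simp only [unitarityDefect, mul_sub, mul_sum]
  refine sum_congr rfl fun β _ => congrArg₂ (· - ·) ?_ ?_ <;>
    exact sum_congr rfl fun p hp => by rw [(mem_filter.1 hp).2]; ring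

end UnitarityDefect

theorem invariance_identity_iff_unitarity_general (d : ℕ)
    (J : Finset ((Fin d → ℕ) × (Fin d → ℕ)))
    (hJsymm : ∀ p ∈ J, (p.2, p.1) ∈ J)
    (K : (Fin d → ℕ) × (Fin d → ℕ) → ℝ)
    (ξ : Fin d → ℝ) :
    (∀ s : Fin d → ℝ, (∀ i, 0 < s i) →
        ∑ p ∈ J, ((∏ i, s i ^ p.2 i) - ∏ i, s i ^ p.1 i) * K p * ∏ i, ξ i ^ p.1 i = 0) ↔
      (∀ β : Fin d → ℕ,
        ∑ p ∈ J.filter (fun p => p.2 = β), K p * ∏ i, ξ i ^ p.1 i =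
          (∏ i, ξ i ^ β i) * ∑ p ∈ J.filter (fun p => p.2 = β), K (p.2, p.1)) := by
  classical
  have hregroup (s : Fin d → ℝ) := sum_sub_mul_eq_sum_mul_unitarityDefect hJsymm K
    (fun β => ∏ i, s i ^ β i) (fun α => ∏ i, ξ i ^ α i)
  have hpositive (s : Fin d → ℝ) : (∀ i, 0 < s i) ↔ s ∈ Set.univ.pi fun _ => Set.Ioi 0 := by
    simp
  simp_rw [hregroup, hpositive,
    sum_prod_pow_mul_eq_zero_on_box_iff _ (fun _ => Set.Ioi_infinite (0 : ℝ))]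
  refine ⟨fun h β => sub_eq_zero.1 ?_, fun h β _ => sub_eq_zero.2 (h β)⟩
  by_cases hβ : β ∈ J.image Prod.snd
  · exact h β hβ
  · exact unitarityDefect_eq_zero_of_notMem_image_snd hβ K fun α => ∏ i, ξ i ^ α i

/-- **Computation underlying Corollary 2.** The identity
`∑_{(α,β)∈J} (s^β - s^α) K(α,β) ξ^α = 0` holds for all `s` in the open positive orthant
if and only if `ξ` satisfies the unitarity (Stückelberg–Batishcheva–Pirogov) condition. -/
theorem invariance_identity_iff_unitarity (d : ℕ)
    (J : Finset ((Fin d → ℕ) × (Fin d → ℕ)))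
    (hJsymm : ∀ p ∈ J, (p.2, p.1) ∈ J)
    (K : (Fin d → ℕ) × (Fin d → ℕ) → ℝ) (hK : ∀ p ∈ J, 0 ≤ K p)
    (ξ : Fin d → ℝ) (hξ : ∀ i, 0 < ξ i) :
    (∀ s : Fin d → ℝ, (∀ i, 0 < s i) →
        ∑ p ∈ J, ((∏ i, s i ^ p.2 i) - ∏ i, s i ^ p.1 i) * K p * ∏ i, ξ i ^ p.1 i = 0) ↔
      (∀ β : Fin d → ℕ,
        ∑ p ∈ J.filter (fun p => p.2 = β), K p * ∏ i, ξ i ^ p.1 i =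
          (∏ i, ξ i ^ β i) * ∑ p ∈ J.filter (fun p => p.2 = β), K (p.2, p.1)) :=
  invariance_identity_iff_unitarity_general d J hJsymm K ξ
end
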